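/- Let A ∈ ℝ^{M×n} and H ∈ ℝ^{n×n} symmetric positive definite, a > 0, ỹ ∈ ℝ^M. Then the solution β_a of (AᵀA + aH)β = Aᵀỹ satisfies β_a → β₀ as a → 0⁺, where β₀ = H^{-1/2}(H^{-1/2}AᵀAH^{-1/2})⁺H^{-1/2}Aᵀỹ is the minimum-H-norm least-squares solution of Aβ = ỹ (here ⁺ denotes the Moore–Penrose pseudoinverse). -/

import Mathlib

/-!
With `β = S x`, the regularized equation becomes `(K + a) x = S Aᵀ ỹ` for the positive
semidefinite `K = (A S)ᵀ (A S)`. The Penrose conditions show that `y₀ = K⁺ S Aᵀ ỹ` solves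
`K y₀ = S Aᵀ ỹ` and lies in the range of `K`, say `y₀ = K z`. Then `u = x - y₀ + a z` solves
`(K + a) u = a² z`, so positivity of `K` gives `‖u‖ ≤ a ‖z‖` and `‖x - y₀‖ ≤ 2 a ‖z‖ → 0`.
Finally `β₀ = S y₀` satisfies the normal equations, and `H β₀ = Aᵀ A S z` is `H`-orthogonal to
every `δ` with `A δ = 0`, so `β₀` has the least `H`-norm among least-squares solutions.
-/

open Matrix Filter Topology
open scoped InnerProductSpace

namespace LinearMap

variable {E : Type*} [NormedAddCommGroup E] [InnerProductSpace ℝ E] {T : E →ₗ[ℝ] E}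

theorem mul_norm_le_norm_add_smul (hT : ∀ v, 0 ≤ ⟪T v, v⟫_ℝ) (a : ℝ) (u : E) :
    a * ‖u‖ ≤ ‖T u + a • u‖ := by
  rcases (norm_nonneg u).eq_or_lt with hu | hu
  · rw [← hu, mul_zero]
    exact norm_nonneg _
  refine le_of_mul_le_mul_right ?_ hu
  calc a * ‖u‖ * ‖u‖ ≤ ⟪T u, u⟫_ℝ + a * ‖u‖ ^ 2 := by nlinarith [hT u]
    _ = ⟪T u + a • u, u⟫_ℝ := by
      rw [inner_add_left, real_inner_smul_left, real_inner_self_eq_norm_sq]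
    _ ≤ ‖T u + a • u‖ * ‖u‖ := real_inner_le_norm _ _

theorem norm_sub_le_of_add_smul_eq (hT : ∀ v, 0 ≤ ⟪T v, v⟫_ℝ) {a : ℝ} (ha : 0 < a) {x z : E}
    (hx : T x + a • x = T (T z)) : ‖x - T z‖ ≤ 2 * a * ‖z‖ := by
  set u := x - T z + a • z
  have hu : T u + a • u = a • (a • z) := by
    simp only [u, map_add, map_sub, map_smul]
    linear_combination (norm := module) hx
  have hnorm : a * ‖u‖ ≤ a * (a * ‖z‖) := by
    simpa [hu, norm_smul, abs_of_pos ha] using mul_norm_le_norm_add_smul hT a u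
  calc ‖x - T z‖ = ‖u - a • z‖ := by simp [u]
    _ ≤ ‖u‖ + a * ‖z‖ := by simpa [norm_smul, abs_of_pos ha] using norm_sub_le u (a • z)
    _ ≤ 2 * a * ‖z‖ := by nlinarith [le_of_mul_le_mul_left hnorm ha]

theorem tendsto_of_add_smul_eq (hT : ∀ v, 0 ≤ ⟪T v, v⟫_ℝ) {x : ℝ → E} {z : E}
    (hx : ∀ a, 0 < a → T (x a) + a • x a = T (T z)) :
    Tendsto x (𝓝[>] 0) (𝓝 (T z)) := by
  rw [tendsto_iff_norm_sub_tendsto_zero]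
  refine squeeze_zero' (Eventually.of_forall fun _ => norm_nonneg _)
    (eventually_nhdsWithin_of_forall fun a ha => norm_sub_le_of_add_smul_eq hT ha (hx a ha)) ?_
  have : Tendsto (fun a : ℝ => 2 * a * ‖z‖) (𝓝 0) (𝓝 (2 * 0 * ‖z‖)) :=
    (continuous_const.mul continuous_id |>.mul continuous_const).tendsto 0
  simpa using this.mono_left nhdsWithin_le_nhds

end LinearMap

namespace Matrix

variable {m n : Type*} [Fintype m] [Fintype n]

theorem PosSemidef.tendsto_of_add_smul_eq [DecidableEq n] {K : Matrix n n ℝ} (hK : K.PosSemidef)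
    {x : ℝ → n → ℝ} {z : n → ℝ} (hx : ∀ a, 0 < a → K *ᵥ x a + a • x a = K *ᵥ (K *ᵥ z)) :
    Tendsto x (𝓝[>] 0) (𝓝 (K *ᵥ z)) := by
  have hT : ∀ v, 0 ≤ ⟪K.toEuclideanLin v, v⟫_ℝ :=
    (isPositive_toEuclideanLin_iff.mpr hK).inner_nonneg_left
  have hlim := LinearMap.tendsto_of_add_smul_eq hT (x := fun a => WithLp.toLp 2 (x a))
    (z := WithLp.toLp 2 z) fun a ha => congrArg (WithLp.toLp 2) (hx a ha)
  exact (PiLp.continuous_ofLp 2 _).tendsto _ |>.comp hlim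

theorem mul_pinv_mul_transpose {B : Matrix m n ℝ} {K P : Matrix n n ℝ} (hK : K = Bᵀ * B)
    (h₁ : K * P * K = K) (h₃ : (K * P)ᵀ = K * P) : K * P * Bᵀ = Bᵀ := by
  classical
  set E := (K * P - 1) * Bᵀ
  have hE : E * Eᵀ = 0 := by
    have hKPK : (K * P - 1) * K = 0 := by rw [Matrix.sub_mul, h₁, Matrix.one_mul, sub_self]
    simp only [E, transpose_mul, transpose_sub, h₃, transpose_one, transpose_transpose]
    rw [Matrix.mul_assoc, ← Matrix.mul_assoc Bᵀ, ← Matrix.mul_assoc, ← hK, hKPK, Matrix.zero_mul]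
  have h₀ : (K * P - 1) * Bᵀ = 0 := self_mul_conjTranspose_eq_zero.mp hE
  rwa [Matrix.sub_mul, Matrix.one_mul, sub_eq_zero] at h₀

theorem pinv_eq_mul_transpose_mul_self {K P : Matrix n n ℝ} (hK : Kᵀ = K)
    (h₂ : P * K * P = P) (h₄ : (P * K)ᵀ = P * K) : P = K * (Pᵀ * P) := by
  calc P = (P * K)ᵀ * P := by rw [h₄, h₂]
    _ = K * (Pᵀ * P) := by rw [transpose_mul, hK, Matrix.mul_assoc]

section LeastSquares

variable {R : Type*} [CommRing R] (A : Matrix m n R) {y : m → R} {β₀ : n → R}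

theorem residual_dotProduct_eq_of_normal_eq (hβ₀ : Aᵀ *ᵥ (A *ᵥ β₀ - y) = 0) (β : n → R) :
    (A *ᵥ β - y) ⬝ᵥ (A *ᵥ β - y) =
      (A *ᵥ (β - β₀)) ⬝ᵥ (A *ᵥ (β - β₀)) + (A *ᵥ β₀ - y) ⬝ᵥ (A *ᵥ β₀ - y) := by
  have horth : (A *ᵥ (β - β₀)) ⬝ᵥ (A *ᵥ β₀ - y) = 0 := by
    rw [dotProduct_comm, dotProduct_mulVec, ← mulVec_transpose, hβ₀, zero_dotProduct]
  have hsplit : A *ᵥ β - y = A *ᵥ (β - β₀) + (A *ᵥ β₀ - y) := by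
    rw [mulVec_sub]
    abel
  rw [hsplit, add_dotProduct, dotProduct_add, dotProduct_add, horth,
    dotProduct_comm (A *ᵥ β₀ - y), horth]
  ring

variable [LinearOrder R] [IsStrictOrderedRing R]

theorem residual_dotProduct_le_of_normal_eq (hβ₀ : Aᵀ *ᵥ (A *ᵥ β₀ - y) = 0) (β : n → R) :
    (A *ᵥ β₀ - y) ⬝ᵥ (A *ᵥ β₀ - y) ≤ (A *ᵥ β - y) ⬝ᵥ (A *ᵥ β - y) := by
  rw [A.residual_dotProduct_eq_of_normal_eq hβ₀ β]
  exact le_add_of_nonneg_left (Fintype.sum_nonneg fun _ => mul_self_nonneg _)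

theorem mulVec_sub_eq_zero_of_residual_eq (hβ₀ : Aᵀ *ᵥ (A *ᵥ β₀ - y) = 0) {β : n → R}
    (hβ : (A *ᵥ β - y) ⬝ᵥ (A *ᵥ β - y) = (A *ᵥ β₀ - y) ⬝ᵥ (A *ᵥ β₀ - y)) :
    A *ᵥ (β - β₀) = 0 := by
  rw [A.residual_dotProduct_eq_of_normal_eq hβ₀ β, add_eq_right] at hβ
  exact dotProduct_self_eq_zero.mp hβ

end LeastSquares

theorem PosSemidef.dotProduct_mulVec_le_of_dotProduct_mulVec_eq_zero {H : Matrix n n ℝ}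
    (hH : H.PosSemidef) {v δ : n → ℝ} (hδ : δ ⬝ᵥ (H *ᵥ v) = 0) :
    v ⬝ᵥ (H *ᵥ v) ≤ (v + δ) ⬝ᵥ (H *ᵥ (v + δ)) := by
  have hsymm : v ⬝ᵥ (H *ᵥ δ) = δ ⬝ᵥ (H *ᵥ v) := by
    rw [dotProduct_mulVec, ← mulVec_transpose, (isHermitian_iff_isSymm.mp hH.isHermitian).eq,
      dotProduct_comm]
  have hδδ : 0 ≤ δ ⬝ᵥ (H *ᵥ δ) := hH.dotProduct_mulVec_nonneg δ
  rw [mulVec_add, add_dotProduct, dotProduct_add, dotProduct_add, hsymm, hδ]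
  linarith

theorem PosSemidef.dotProduct_mulVec_le_of_residual_eq {A : Matrix m n ℝ} {H : Matrix n n ℝ}
    (hH : H.PosSemidef) {y : m → ℝ} {β₀ : n → ℝ} (hβ₀ : Aᵀ *ᵥ (A *ᵥ β₀ - y) = 0)
    {w : m → ℝ} (hHβ₀ : H *ᵥ β₀ = Aᵀ *ᵥ w) {β : n → ℝ}
    (hβ : (A *ᵥ β - y) ⬝ᵥ (A *ᵥ β - y) = (A *ᵥ β₀ - y) ⬝ᵥ (A *ᵥ β₀ - y)) :
    β₀ ⬝ᵥ (H *ᵥ β₀) ≤ β ⬝ᵥ (H *ᵥ β) := by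
  have horth : (β - β₀) ⬝ᵥ (H *ᵥ β₀) = 0 := by
    rw [hHβ₀, mulVec_transpose, dotProduct_comm, ← dotProduct_mulVec,
      A.mulVec_sub_eq_zero_of_residual_eq hβ₀ hβ, dotProduct_zero]
  simpa using hH.dotProduct_mulVec_le_of_dotProduct_mulVec_eq_zero horth

section Whitening

variable [DecidableEq n] {R : Type*} [CommRing R] (A : Matrix m n R) {H S : Matrix n n R}
  {y : m → R}

theorem whitened_eq_of_regularized_eq (hS : S * H * S = 1) {a : R} {x : n → R}
    (h : (Aᵀ * A + a • H) *ᵥ (S *ᵥ x) = Aᵀ *ᵥ y) :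
    (S * Aᵀ * A * S) *ᵥ x + a • x = S *ᵥ (Aᵀ *ᵥ y) := by
  rw [← h, mulVec_mulVec, mulVec_mulVec, Matrix.mul_add, Matrix.add_mul, Matrix.mul_smul,
    Matrix.smul_mul, hS, add_mulVec, smul_mulVec, one_mulVec]
  simp only [Matrix.mul_assoc]

theorem normal_eq_of_whitened_normal_eq (hS : H * S * S = 1) {y₀ : n → R}
    (hy₀ : (S * Aᵀ * A * S) *ᵥ y₀ = S *ᵥ (Aᵀ *ᵥ y)) : Aᵀ *ᵥ (A *ᵥ (S *ᵥ y₀) - y) = 0 := by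
  rw [mulVec_sub, sub_eq_zero]
  calc Aᵀ *ᵥ (A *ᵥ (S *ᵥ y₀)) = (H * S * (S * Aᵀ * A * S)) *ᵥ y₀ := by
        simp only [mulVec_mulVec, ← Matrix.mul_assoc, hS, Matrix.one_mul]
    _ = Aᵀ *ᵥ y := by rw [← mulVec_mulVec, hy₀, mulVec_mulVec, hS, one_mulVec]

theorem mulVec_whitened_eq_transpose_mulVec (hS : H * S * S = 1) (z : n → R) :
    H *ᵥ (S *ᵥ ((S * Aᵀ * A * S) *ᵥ z)) = Aᵀ *ᵥ (A *ᵥ (S *ᵥ z)) := by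
  simp only [mulVec_mulVec, ← Matrix.mul_assoc, hS, Matrix.one_mul]

end Whitening

theorem tendsto_regularized_solution [DecidableEq n] (A : Matrix m n ℝ) {H S : Matrix n n ℝ}
    (hS : S.IsSymm) (hSSH : S * S * H = 1) {y : m → ℝ} {z : n → ℝ}
    (hz : S *ᵥ (Aᵀ *ᵥ y) = (S * Aᵀ * A * S) *ᵥ ((S * Aᵀ * A * S) *ᵥ z))
    {β : ℝ → n → ℝ} (hβ : ∀ a, 0 < a → (Aᵀ * A + a • H) *ᵥ β a = Aᵀ *ᵥ y) :
    Tendsto β (𝓝[>] 0) (𝓝 (S *ᵥ ((S * Aᵀ * A * S) *ᵥ z))) := by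
  have hSHS : S * H * S = 1 := mul_eq_one_comm.mp (by rwa [Matrix.mul_assoc] at hSSH)
  have hSβ : ∀ a, S *ᵥ ((S * H) *ᵥ β a) = β a := fun a => by
    rw [mulVec_mulVec, ← Matrix.mul_assoc, hSSH, one_mulVec]
  have hK : (S * Aᵀ * A * S).PosSemidef := by
    simpa [conjTranspose_eq_transpose_of_trivial, transpose_mul, hS.eq, Matrix.mul_assoc] using
      posSemidef_conjTranspose_mul_self (A * S)
  have hx := hK.tendsto_of_add_smul_eq fun a ha =>
    hz ▸ A.whitened_eq_of_regularized_eq hSHS (by rw [hSβ]; exact hβ a ha)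
  rw [← funext hSβ]
  exact ((continuous_const.matrix_mulVec continuous_id).tendsto _).comp hx

end Matrix

theorem stmt17_general (M n : ℕ)
    (A : Matrix (Fin M) (Fin n) ℝ)
    (H : Matrix (Fin n) (Fin n) ℝ) (hH : H.PosDef)
    (ytil : Fin M → ℝ)
    -- S = H^{-1/2}: the symmetric positive definite square root of H⁻¹
    (S : Matrix (Fin n) (Fin n) ℝ) (hSsymm : S.IsSymm)
    (hSsq : S * S = H⁻¹)
    -- P = (S AᵀA S)⁺: the Moore–Penrose pseudoinverse, via the Penrose conditions
    (P : Matrix (Fin n) (Fin n) ℝ)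
    (hP1 : (S * Aᵀ * A * S) * P * (S * Aᵀ * A * S) = S * Aᵀ * A * S)
    (hP2 : P * (S * Aᵀ * A * S) * P = P)
    (hP3 : ((S * Aᵀ * A * S) * P)ᵀ = (S * Aᵀ * A * S) * P)
    (hP4 : (P * (S * Aᵀ * A * S))ᵀ = P * (S * Aᵀ * A * S))
    -- β a : the solution of the regularized normal equation for each a > 0
    (β : ℝ → Fin n → ℝ)
    (hβ : ∀ a : ℝ, 0 < a → (Aᵀ * A + a • H) *ᵥ β a = Aᵀ *ᵥ ytil)
    (β₀ : Fin n → ℝ)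
    (hβ₀ : β₀ = S *ᵥ (P *ᵥ (S *ᵥ (Aᵀ *ᵥ ytil)))) :
    Filter.Tendsto β (nhdsWithin 0 (Set.Ioi 0)) (nhds β₀) ∧
    -- β₀ is the minimum-H-norm least-squares solution of Aβ = ỹ
    (∀ β' : Fin n → ℝ,
      (A *ᵥ β₀ - ytil) ⬝ᵥ (A *ᵥ β₀ - ytil) ≤ (A *ᵥ β' - ytil) ⬝ᵥ (A *ᵥ β' - ytil)) ∧
    (∀ β' : Fin n → ℝ,
      ((A *ᵥ β' - ytil) ⬝ᵥ (A *ᵥ β' - ytil)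
          = (A *ᵥ β₀ - ytil) ⬝ᵥ (A *ᵥ β₀ - ytil)) →
        β₀ ⬝ᵥ (H *ᵥ β₀) ≤ β' ⬝ᵥ (H *ᵥ β')) := by
  have hHdet : IsUnit H.det := hH.det_pos.ne'.isUnit
  have hSSH : S * S * H = 1 := by rw [hSsq, nonsing_inv_mul H hHdet]
  have hHSS : H * S * S = 1 := by rw [Matrix.mul_assoc, hSsq, mul_nonsing_inv H hHdet]
  set K := S * Aᵀ * A * S
  have hK : K = (A * S)ᵀ * (A * S) := by
    simp only [K, transpose_mul, hSsymm.eq, Matrix.mul_assoc]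
  have hc : S *ᵥ (Aᵀ *ᵥ ytil) = (A * S)ᵀ *ᵥ ytil := by
    rw [transpose_mul, hSsymm.eq, mulVec_mulVec]
  have hKy₀ : K *ᵥ (P *ᵥ (S *ᵥ (Aᵀ *ᵥ ytil))) = S *ᵥ (Aᵀ *ᵥ ytil) := by
    rw [hc, mulVec_mulVec, mulVec_mulVec, mul_pinv_mul_transpose hK hP1 hP3]
  have hKt : Kᵀ = K := by rw [hK, transpose_mul, transpose_transpose]
  have hy₀ : ∀ v, P *ᵥ v = K *ᵥ ((Pᵀ * P) *ᵥ v) := fun v => by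
    rw [mulVec_mulVec, ← pinv_eq_mul_transpose_mul_self hKt hP2 hP4]
  have hnormal : Aᵀ *ᵥ (A *ᵥ β₀ - ytil) = 0 :=
    hβ₀ ▸ A.normal_eq_of_whitened_normal_eq hHSS hKy₀
  have hHβ₀ : H *ᵥ β₀ = Aᵀ *ᵥ (A *ᵥ (S *ᵥ ((Pᵀ * P) *ᵥ (S *ᵥ (Aᵀ *ᵥ ytil))))) := by
    rw [hβ₀, hy₀, A.mulVec_whitened_eq_transpose_mulVec hHSS]
  refine ⟨?_, A.residual_dotProduct_le_of_normal_eq hnormal,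
    fun β' h => hH.posSemidef.dotProduct_mulVec_le_of_residual_eq hnormal hHβ₀ h⟩
  rw [hβ₀, hy₀]
  exact A.tendsto_regularized_solution hSsymm hSSH (by rw [← hy₀, hKy₀]) hβ

/-- **Convergence of Tikhonov solutions to the minimum-`H`-norm least-squares
solution.** Let `A ∈ ℝ^{M×n}`, `H ∈ ℝ^{n×n}` symmetric positive definite,
`a > 0`, `ỹ ∈ ℝ^M`. Let `S = H^{-1/2}` be the symmetric positive definite
square root of `H⁻¹` and let `P` be the Moore–Penrose pseudoinverse of
`K = H^{-1/2}AᵀAH^{-1/2}` (characterized by the four Penrose conditions).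
Then the solution `β a` of `(AᵀA + aH)β = Aᵀỹ` satisfies `β a → β₀` as
`a → 0⁺`, where `β₀ = H^{-1/2}(H^{-1/2}AᵀAH^{-1/2})⁺H^{-1/2}Aᵀỹ` is the
minimum-`H`-norm least-squares solution of `Aβ = ỹ`. -/
theorem stmt17 (M n : ℕ)
    (A : Matrix (Fin M) (Fin n) ℝ)
    (H : Matrix (Fin n) (Fin n) ℝ) (hH : H.PosDef)
    (ytil : Fin M → ℝ)
    -- S = H^{-1/2}: the symmetric positive definite square root of H⁻¹
    (S : Matrix (Fin n) (Fin n) ℝ) (hSpd : S.PosDef) (hSsymm : S.IsSymm)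
    (hSsq : S * S = H⁻¹)
    -- P = (S AᵀA S)⁺: the Moore–Penrose pseudoinverse, via the Penrose conditions
    (P : Matrix (Fin n) (Fin n) ℝ)
    (hP1 : (S * Aᵀ * A * S) * P * (S * Aᵀ * A * S) = S * Aᵀ * A * S)
    (hP2 : P * (S * Aᵀ * A * S) * P = P)
    (hP3 : ((S * Aᵀ * A * S) * P)ᵀ = (S * Aᵀ * A * S) * P)
    (hP4 : (P * (S * Aᵀ * A * S))ᵀ = P * (S * Aᵀ * A * S))
    -- β a : the solution of the regularized normal equation for each a > 0
    (β : ℝ → Fin n → ℝ)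
    (hβ : ∀ a : ℝ, 0 < a → (Aᵀ * A + a • H) *ᵥ β a = Aᵀ *ᵥ ytil)
    (β₀ : Fin n → ℝ)
    (hβ₀ : β₀ = S *ᵥ (P *ᵥ (S *ᵥ (Aᵀ *ᵥ ytil)))) :
    Filter.Tendsto β (nhdsWithin 0 (Set.Ioi 0)) (nhds β₀) ∧
    -- β₀ is the minimum-H-norm least-squares solution of Aβ = ỹ
    (∀ β' : Fin n → ℝ,
      (A *ᵥ β₀ - ytil) ⬝ᵥ (A *ᵥ β₀ - ytil) ≤ (A *ᵥ β' - ytil) ⬝ᵥ (A *ᵥ β' - ytil)) ∧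
    (∀ β' : Fin n → ℝ,
      ((A *ᵥ β' - ytil) ⬝ᵥ (A *ᵥ β' - ytil)
          = (A *ᵥ β₀ - ytil) ⬝ᵥ (A *ᵥ β₀ - ytil)) →
        β₀ ⬝ᵥ (H *ᵥ β₀) ≤ β' ⬝ᵥ (H *ᵥ β')) :=
  stmt17_general M n A H hH ytil S hSsymm hSsq P hP1 hP2 hP3 hP4 β hβ β₀ hβ₀
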